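/- arXiv:cs/0410032 — 7 statements merged into one kernel-verified Lean document; each statement's English description precedes it below -/
import Mathlib

section
/- For every integer n ≥ 3, there exists a deterministic finite automaton M with exactly n states over the two-letter alphabet {0,1} such that every deterministic finite automaton accepting the language L(M)·L(M) (the concatenation of L(M) with itself) has at least n·2^n − 2^(n−1) states. -/
/-!
Reading a word `w`, the subset construction for `L(M)²` keeps the pair `(q, S)` where `q` is the
state of `M` after `w` and `S` the set of states of `M` after the suffixes `v` of `w = u v` with
`u ∈ L(M)`. Take for `M` the cyclic automaton on `ℤ/n` in which `0` rotates the states, `1` sends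
`1` to `0` and fixes the others, `0` is initial and `-1` final. Every pair with `q = -1 → 0 ∈ S`
is reachable: from `(0, S)`, the word `0ⁿ` inserts `1` into `S`, and `01` shifts every element of
an `S ∌ 0` up by one. Any two pairs are distinguishable: `0ᵏ` with `k < n` tests `-1 - k ∈ S`,
and `0ʲ 1 0²⁽ⁿ⁻¹⁾` with `j = -q` separates `q` from any `q' ∉ {q, q + 1}`. By Myhill–Nerode, a
DFA for `L(M)²` has at least as many states as there are such pairs, namely `n 2ⁿ - 2ⁿ⁻¹`.
-/

namespace DFA

variable {α σ₁ σ₂ : Type*} [DecidableEq σ₂] (M₁ : DFA α σ₁) (M₂ : DFA α σ₂)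
  [DecidablePred (· ∈ M₁.accept)]

def concat : DFA α (σ₁ × Finset σ₂) where
  step p a := (M₁.step p.1 a,
    p.2.image (M₂.step · a) ∪ if M₁.step p.1 a ∈ M₁.accept then {M₂.start} else ∅)
  start := (M₁.start, if M₁.start ∈ M₁.accept then {M₂.start} else ∅)
  accept := {p | ∃ s ∈ p.2, s ∈ M₂.accept}

theorem concat_evalFrom_fst (p : σ₁ × Finset σ₂) (w : List α) :
    ((M₁.concat M₂).evalFrom p w).1 = M₁.evalFrom p.1 w := by
  induction w generalizing p with
  | nil => rfl
  | cons a w ih => exact ih _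

theorem concat_step_fst (p : σ₁ × Finset σ₂) (a : α) :
    ((M₁.concat M₂).step p a).1 = M₁.step p.1 a := rfl

theorem mem_concat_step_snd (p : σ₁ × Finset σ₂) (a : α) (s : σ₂) :
    s ∈ ((M₁.concat M₂).step p a).2 ↔
      (∃ t ∈ p.2, M₂.step t a = s) ∨ (M₁.step p.1 a ∈ M₁.accept ∧ M₂.start = s) := by
  by_cases h : M₁.step p.1 a ∈ M₁.accept <;> simp [concat, h, or_comm, eq_comm]

theorem mem_concat_evalFrom_snd (q : σ₁) (S : Finset σ₂) (w : List α) (s : σ₂) :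
    s ∈ ((M₁.concat M₂).evalFrom (q, S) w).2 ↔
      (∃ t ∈ S, M₂.evalFrom t w = s) ∨
        ∃ a u v, w = a :: u ++ v ∧ M₁.evalFrom q (a :: u) ∈ M₁.accept ∧ M₂.eval v = s := by
  induction w generalizing q S with
  | nil => simp
  | cons a w ih =>
    rw [evalFrom_cons, ← Prod.mk.eta (p := (M₁.concat M₂).step _ _), ih]
    simp only [mem_concat_step_snd, List.cons_append, List.cons.injEq, evalFrom_cons]
    constructor
    · rintro ((⟨t, (⟨t', ht', rfl⟩ | ⟨hq, rfl⟩), rfl⟩) | ⟨b, u, v, rfl, hu, rfl⟩)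
      · exact Or.inl ⟨t', ht', rfl⟩
      · exact Or.inr ⟨a, [], w, by simp, hq, rfl⟩
      · exact Or.inr ⟨a, b :: u, v, by simp, hu, rfl⟩
    · rintro (⟨t, ht, rfl⟩ | ⟨b, u, v, ⟨rfl, hw⟩, hu, rfl⟩)
      · exact Or.inl ⟨_, Or.inl ⟨t, ht, rfl⟩, rfl⟩
      · cases u with
        | nil => exact Or.inl ⟨_, Or.inr ⟨hu, rfl⟩, by simp [hw, eval]⟩
        | cons c u => exact Or.inr ⟨c, u, v, by simpa using hw, hu, rfl⟩

theorem mem_concat_eval_snd (w : List α) (s : σ₂) :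
    s ∈ ((M₁.concat M₂).eval w).2 ↔ ∃ u v, w = u ++ v ∧ u ∈ M₁.accepts ∧ M₂.eval v = s := by
  rw [eval, show (M₁.concat M₂).start = (M₁.start, _) from rfl, mem_concat_evalFrom_snd]
  constructor
  · rintro (⟨t, ht, rfl⟩ | ⟨a, u, v, rfl, hu, rfl⟩)
    · by_cases h : M₁.start ∈ M₁.accept
      · obtain rfl : t = M₂.start := by simpa [h] using ht
        exact ⟨[], w, rfl, h, rfl⟩
      · simp [h] at ht
    · exact ⟨a :: u, v, rfl, hu, rfl⟩
  · rintro ⟨_ | ⟨a, u⟩, v, rfl, hu, rfl⟩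
    · exact Or.inl ⟨M₂.start, by simp [show M₁.start ∈ M₁.accept from hu], rfl⟩
    · exact Or.inr ⟨a, u, v, rfl, hu, rfl⟩

theorem accepts_concat : (M₁.concat M₂).accepts = M₁.accepts * M₂.accepts := by
  ext w
  change (∃ s ∈ ((M₁.concat M₂).eval w).2, s ∈ M₂.accept) ↔ _
  simp only [mem_concat_eval_snd, Language.mem_mul]
  constructor
  · rintro ⟨_, ⟨u, v, rfl, hu, rfl⟩, hv⟩
    exact ⟨u, hu, v, hv, rfl⟩
  · rintro ⟨u, hu, v, hv, rfl⟩
    exact ⟨_, ⟨u, v, rfl, hu, rfl⟩, hv⟩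

variable {τ : Type*} [Fintype τ] {M : DFA α σ₁} {N : DFA α τ}

theorem evalFrom_mem_range_eval {p : σ₁} (hp : p ∈ Set.range M.eval) (w : List α) :
    M.evalFrom p w ∈ Set.range M.eval := by
  obtain ⟨x, rfl⟩ := hp
  exact ⟨x ++ w, M.evalFrom_of_append _ _ _⟩

theorem card_le_of_accepts_eq (h : N.accepts = M.accepts) {P : Finset σ₁}
    (hreach : ∀ p ∈ P, p ∈ Set.range M.eval) (hinj : Set.InjOn M.acceptsFrom P) :
    P.card ≤ Fintype.card τ := by
  choose! w hw using hreach
  refine Finset.card_le_univ _ |>.trans' <| Finset.card_le_card_of_injOn (fun p => N.eval (w p))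
    (fun _ _ => Finset.mem_coe.2 (Finset.mem_univ _)) ?_
  intro p hp q hq hpq
  apply hinj hp hq
  calc M.acceptsFrom p = N.accepts.leftQuotient (w p) := by
        rw [h, Language.leftQuotient_accepts_apply, hw p hp]
    _ = N.accepts.leftQuotient (w q) := by
        simp only [Language.leftQuotient_accepts_apply, hpq]
    _ = M.acceptsFrom q := by rw [h, Language.leftQuotient_accepts_apply, hw q hq]

end DFA

theorem ZMod.natCast_eq_neg_one_iff {n j : ℕ} (hj : j + 1 < 2 * n) :
    (j : ZMod n) = -1 ↔ j + 1 = n := by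
  rw [eq_neg_iff_add_eq_zero, ← Nat.cast_succ, ZMod.natCast_eq_zero_iff]
  exact ⟨fun h => Nat.eq_of_dvd_of_lt_two_mul j.succ_ne_zero h hj, fun h => h ▸ dvd_rfl⟩

theorem ZMod.natCast_pred_self (n : ℕ) [NeZero n] : ((n - 1 : ℕ) : ZMod n) = -1 := by
  have := NeZero.one_le (n := n)
  exact (ZMod.natCast_eq_neg_one_iff (by omega)).2 (by omega)
theorem ZMod.two_ne_zero_of_three_le {n : ℕ} (hn : 3 ≤ n) : (2 : ZMod n) ≠ 0 := by
  rw [← Nat.cast_ofNat, Ne, ZMod.natCast_eq_zero_iff]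
  exact fun h => absurd (Nat.le_of_dvd two_pos h) (by omega)

open Finset in
theorem card_filter_fst_eq_imp_mem_snd {α β : Type*} [Fintype α] [Fintype β] [DecidableEq α]
    [DecidableEq β] (a : α) (b : β) :
    #{p : α × Finset β | p.1 = a → b ∈ p.2} =
      Fintype.card α * 2 ^ Fintype.card β - 2 ^ (Fintype.card β - 1) := by
  have hcompl : #{p : α × Finset β | ¬(p.1 = a → b ∈ p.2)} = 2 ^ (Fintype.card β - 1) := by
    have : ({p : α × Finset β | ¬(p.1 = a → b ∈ p.2)} : Finset _) =
        {a} ×ˢ (univ.erase b).powerset := by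
      ext ⟨q, S⟩
      simp [Finset.subset_erase, and_comm, eq_comm]
    rw [this, card_product, card_singleton, card_powerset, card_erase_of_mem (mem_univ _),
      card_univ, one_mul]
  have htotal := card_filter_add_card_filter_not (s := univ)
    (fun p : α × Finset β => p.1 = a → b ∈ p.2)
  rw [hcompl, card_univ, Fintype.card_prod, Fintype.card_finset] at htotal
  omega

namespace SquareWitness

variable {n : ℕ}

def dfa (n : ℕ) : DFA (Fin 2) (ZMod n) where
  step q c := if c = 0 then q + 1 else if q = 1 then 0 else q
  start := 0
  accept := {-1}

instance : DecidablePred (· ∈ (dfa n).accept) := fun q => inferInstanceAs (Decidable (q = -1))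

abbrev squareDFA (n : ℕ) : DFA (Fin 2) (ZMod n × Finset (ZMod n)) := (dfa n).concat (dfa n)

theorem step_zero (q : ZMod n) : (dfa n).step q 0 = q + 1 := rfl

theorem step_one (q : ZMod n) : (dfa n).step q 1 = if q = 1 then 0 else q := rfl

theorem mem_accept {q : ZMod n} : q ∈ (dfa n).accept ↔ q = -1 := Iff.rfl

theorem mem_squareDFA_accept {p : ZMod n × Finset (ZMod n)} :
    p ∈ (squareDFA n).accept ↔ -1 ∈ p.2 := by
  change (∃ s ∈ p.2, s ∈ (dfa n).accept) ↔ _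
  simp [mem_accept]

theorem evalFrom_replicate_zero (q : ZMod n) (k : ℕ) :
    (dfa n).evalFrom q (List.replicate k 0) = q + k := by
  induction k generalizing q with
  | zero => simp
  | succ k ih =>
    rw [List.replicate_succ, DFA.evalFrom_cons, ih, step_zero]
    push_cast
    ring

theorem eval_replicate_zero (k : ℕ) : (dfa n).eval (List.replicate k 0) = k :=
  (evalFrom_replicate_zero 0 k).trans (zero_add _)

theorem squareDFA_evalFrom_replicate_zero_fst (p : ZMod n × Finset (ZMod n)) (k : ℕ) :
    ((squareDFA n).evalFrom p (List.replicate k 0)).1 = p.1 + k := by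
  rw [DFA.concat_evalFrom_fst, evalFrom_replicate_zero]

theorem mem_squareDFA_evalFrom_replicate_zero_snd (q : ZMod n) (S : Finset (ZMod n)) (k : ℕ)
    (s : ZMod n) :
    s ∈ ((squareDFA n).evalFrom (q, S) (List.replicate k 0)).2 ↔
      s - k ∈ S ∨ ∃ i j, k = i + j ∧ 0 < i ∧ q + i = -1 ∧ (j : ZMod n) = s := by
  rw [DFA.mem_concat_evalFrom_snd]
  refine or_congr ?_ ⟨?_, ?_⟩
  · simp [evalFrom_replicate_zero, ← eq_sub_iff_add_eq]
  · rintro ⟨a, u, v, h, hu, rfl⟩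
    obtain ⟨hlen, hau, hv⟩ := List.replicate_eq_append_iff.1 h
    refine ⟨(a :: u).length, v.length, hlen.symm, by simp, ?_, ?_⟩
    · rwa [hau, evalFrom_replicate_zero] at hu
    · rw [hv, eval_replicate_zero, List.length_replicate]
  · rintro ⟨_ | i, j, rfl, hi, hq, rfl⟩
    · omega
    · refine ⟨0, List.replicate i 0, List.replicate j 0, ?_, ?_, eval_replicate_zero j⟩
      · rw [List.replicate_add, List.replicate_succ, List.cons_append]
      · rwa [← List.replicate_succ, evalFrom_replicate_zero]

theorem squareDFA_start (hn : 3 ≤ n) : (squareDFA n).start = (0, ∅) := by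
  change ((0 : ZMod n), if (0 : ZMod n) ∈ (dfa n).accept then {0} else ∅) = _
  rw [if_neg fun h =>
    ZMod.two_ne_zero_of_three_le hn (by linear_combination 2 * mem_accept.1 h)]

theorem one_notMem_squareDFA_step_one_snd (hn : 3 ≤ n) (p : ZMod n × Finset (ZMod n)) :
    1 ∉ ((squareDFA n).step p 1).2 := by
  have h01 : (0 : ZMod n) ≠ 1 := fun h =>
    ZMod.two_ne_zero_of_three_le hn (by linear_combination -2 * h)
  rw [DFA.mem_concat_step_snd]
  rintro (⟨t, -, ht⟩ | ⟨-, h⟩)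
  · rw [step_one] at ht
    split_ifs at ht with h1
    exacts [h01 ht, h1 ht]
  · exact h01 h

theorem replicate_mem_squareDFA_acceptsFrom_iff {k : ℕ} (hk : k < n) (q : ZMod n)
    (S : Finset (ZMod n)) :
    List.replicate k 0 ∈ (squareDFA n).acceptsFrom (q, S) ↔ (-1 - k : ZMod n) ∈ S := by
  rw [DFA.mem_acceptsFrom, mem_squareDFA_accept, mem_squareDFA_evalFrom_replicate_zero_snd,
    or_iff_left]
  rintro ⟨i, j, rfl, hi, -, hj⟩
  rw [ZMod.natCast_eq_neg_one_iff (by omega)] at hj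
  omega

theorem zero_image_add_one_mem_range (hn : 3 ≤ n) {T : Finset (ZMod n)}
    (hT : (0, T) ∈ Set.range (squareDFA n).eval) (h0 : 0 ∉ T) :
    (0, T.image (· + 1)) ∈ Set.range (squareDFA n).eval := by
  have h0F : (0 : ZMod n) ∉ (dfa n).accept := fun h =>
    ZMod.two_ne_zero_of_three_le hn (by linear_combination 2 * mem_accept.1 h)
  have h1F : (1 : ZMod n) ∉ (dfa n).accept := fun h =>
    ZMod.two_ne_zero_of_three_le hn (by linear_combination mem_accept.1 h)
  convert DFA.evalFrom_mem_range_eval hT [0, 1] using 1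
  refine Prod.ext ?_ ?_
  · change (0 : ZMod n) = (dfa n).step ((dfa n).step 0 0) 1
    rw [step_zero, zero_add, step_one, if_pos rfl]
  ext s
  simp only [DFA.evalFrom_cons, DFA.evalFrom_nil, DFA.mem_concat_step_snd, DFA.concat_step_fst,
    step_zero, step_one, zero_add, if_pos, h1F, h0F, false_and, or_false, Finset.mem_image]
  have hne : ∀ t ∈ T, t + 1 ≠ 1 := fun t ht h => h0 (by rwa [add_eq_right.1 h] at ht)
  constructor
  · rintro ⟨t, ht, rfl⟩
    exact ⟨t + 1, ⟨t, ht, rfl⟩, if_neg (hne t ht)⟩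
  · rintro ⟨_, ⟨t, ht, rfl⟩, rfl⟩
    exact ⟨t, ht, (if_neg (hne t ht)).symm⟩

variable [NeZero n]

theorem replicate_two_mul_mem_squareDFA_acceptsFrom_zero (hn : 2 ≤ n) (U : Finset (ZMod n)) :
    List.replicate (2 * (n - 1)) 0 ∈ (squareDFA n).acceptsFrom (0, U) := by
  rw [DFA.mem_acceptsFrom, mem_squareDFA_accept, mem_squareDFA_evalFrom_replicate_zero_snd]
  exact Or.inr ⟨n - 1, n - 1, two_mul _, by omega, by rw [zero_add, ZMod.natCast_pred_self],
    ZMod.natCast_pred_self n⟩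

theorem replicate_two_mul_notMem_squareDFA_acceptsFrom {e : ZMod n} (he : e ≠ 0)
    {U : Finset (ZMod n)} (hU : 1 ∉ U) :
    List.replicate (2 * (n - 1)) 0 ∉ (squareDFA n).acceptsFrom (e, U) := by
  rw [DFA.mem_acceptsFrom, mem_squareDFA_accept, mem_squareDFA_evalFrom_replicate_zero_snd]
  have hk : ((2 * (n - 1) : ℕ) : ZMod n) = -2 := by
    rw [Nat.cast_mul, ZMod.natCast_pred_self]
    ring
  rintro (h | ⟨i, j, hij, -, hi, hj⟩)
  · exact hU (by rwa [hk, show (-1 : ZMod n) - -2 = 1 by ring] at h)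
  · have hij' := congrArg (Nat.cast : ℕ → ZMod n) hij
    rw [hk, Nat.cast_add] at hij'
    exact he (by linear_combination hi + hij' + hj)

theorem squareDFA_acceptsFrom_ne (hn : 3 ≤ n) {q q' : ZMod n} (h0 : q' ≠ q) (h1 : q' ≠ q + 1)
    (S S' : Finset (ZMod n)) :
    (squareDFA n).acceptsFrom (q, S) ≠ (squareDFA n).acceptsFrom (q', S') := by
  set x := List.replicate (-q).val (0 : Fin 2)
  set y := List.replicate (2 * (n - 1)) (0 : Fin 2)
  have hsplit : ∀ p, x ++ 1 :: y ∈ (squareDFA n).acceptsFrom p ↔ y ∈ (squareDFA n).acceptsFrom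
      ((dfa n).step (p.1 - q) 1, ((squareDFA n).step ((squareDFA n).evalFrom p x) 1).2) := by
    intro p
    have hfst : ((squareDFA n).evalFrom p x).1 = p.1 - q := by
      rw [squareDFA_evalFrom_replicate_zero_fst, ZMod.natCast_zmod_val, sub_eq_add_neg]
    rw [DFA.mem_acceptsFrom, DFA.evalFrom_of_append, DFA.evalFrom_cons, ← hfst]
    rfl
  intro h
  have hacc := (hsplit (q, S)).2 (by
    rw [sub_self, step_one, ite_self]
    exact replicate_two_mul_mem_squareDFA_acceptsFrom_zero (by omega) _)
  rw [h, hsplit, step_one, if_neg (fun h => h1 (by linear_combination h))] at hacc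
  exact replicate_two_mul_notMem_squareDFA_acceptsFrom (sub_ne_zero.2 h0)
    (one_notMem_squareDFA_step_one_snd hn _) hacc

theorem squareDFA_acceptsFrom_injective (hn : 3 ≤ n) :
    Function.Injective (squareDFA n).acceptsFrom := by
  rintro ⟨q₁, S₁⟩ ⟨q₂, S₂⟩ h
  obtain rfl : S₁ = S₂ := by
    ext s
    have hs := congrArg (List.replicate (-1 - s).val 0 ∈ ·) h
    simpa [replicate_mem_squareDFA_acceptsFrom_iff (ZMod.val_lt _)] using hs
  by_contra hne
  have hq : q₂ ≠ q₁ := fun h' => hne (by rw [h'])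
  by_cases h1 : q₂ = q₁ + 1
  · refine squareDFA_acceptsFrom_ne hn hq.symm (fun h2 => ?_) S₁ S₁ h.symm
    exact ZMod.two_ne_zero_of_three_le hn (by linear_combination -h2 - h1)
  · exact squareDFA_acceptsFrom_ne hn hq h1 S₁ S₁ h

theorem zero_insert_one_mem_range (hn : 3 ≤ n) {T : Finset (ZMod n)}
    (hT : (0, T) ∈ Set.range (squareDFA n).eval) :
    (0, insert 1 T) ∈ Set.range (squareDFA n).eval := by
  convert DFA.evalFrom_mem_range_eval hT (List.replicate n 0) using 1
  refine Prod.ext ?_ ?_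
  · rw [squareDFA_evalFrom_replicate_zero_fst, ZMod.natCast_self, add_zero]
  ext s
  rw [mem_squareDFA_evalFrom_replicate_zero_snd, ZMod.natCast_self, sub_zero, Finset.mem_insert,
    or_comm (a := s = 1)]
  refine or_congr Iff.rfl ⟨?_, ?_⟩
  · rintro rfl
    exact ⟨n - 1, 1, by omega, by omega, by rw [zero_add, ZMod.natCast_pred_self], Nat.cast_one⟩
  · rintro ⟨i, j, hij, -, hi, rfl⟩
    rw [zero_add, ZMod.natCast_eq_neg_one_iff (by omega)] at hi
    simp [show j = 1 by omega]

theorem zero_mem_range (hn : 3 ≤ n) (T : Finset (ZMod n)) :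
    (0, T) ∈ Set.range (squareDFA n).eval := by
  -- `(t - 1).val` is the number of `01`-shifts that carry an inserted `1` to `t`.
  suffices h : ∀ k, ∀ T : Finset (ZMod n), (∀ t ∈ T, (t - 1).val < k) →
      (0, T) ∈ Set.range (squareDFA n).eval from h n T fun t _ => ZMod.val_lt _
  intro k
  induction k with
  | zero =>
    intro T hT
    obtain rfl : T = ∅ := Finset.eq_empty_of_forall_notMem fun t ht => by simpa using hT t ht
    exact ⟨[], squareDFA_start hn⟩
  | succ k ih =>
    intro T hT
    have hval1 : (1 : ZMod n).val = 1 := by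
      rw [ZMod.val_one_eq_one_mod, Nat.mod_eq_of_lt (by omega)]
    set T' := (T.erase 1).image (· - 1)
    have hT' : (0, T') ∈ Set.range (squareDFA n).eval := by
      refine ih T' ?_
      simp only [T', Finset.mem_image, Finset.mem_erase]
      rintro _ ⟨t, ⟨ht1, ht⟩, rfl⟩
      have hpos : 0 < (t - 1).val := ZMod.val_pos.2 (sub_ne_zero.2 ht1)
      rw [ZMod.val_sub (by omega), hval1]
      have := hT t ht
      omega
    have h0 : 0 ∉ T' := by simp [T', sub_eq_zero]
    have hErase : T'.image (· + 1) = T.erase 1 := by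
      ext
      simp [T', Finset.image_image]
    have hErase := hErase ▸ zero_image_add_one_mem_range hn hT' h0
    by_cases h1 : 1 ∈ T
    · simpa [Finset.insert_erase h1] using zero_insert_one_mem_range hn hErase
    · rwa [Finset.erase_eq_of_notMem h1] at hErase

theorem mem_range_eval (hn : 3 ≤ n) {q : ZMod n} {S : Finset (ZMod n)} (h : q = -1 → 0 ∈ S) :
    (q, S) ∈ Set.range (squareDFA n).eval := by
  convert DFA.evalFrom_mem_range_eval (zero_mem_range hn (S.image (· - q)))
    (List.replicate q.val 0) using 1
  refine Prod.ext ?_ ?_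
  · rw [squareDFA_evalFrom_replicate_zero_fst, ZMod.natCast_zmod_val, zero_add]
  ext s
  rw [mem_squareDFA_evalFrom_replicate_zero_snd, ZMod.natCast_zmod_val]
  simp only [Finset.mem_image, sub_left_inj, exists_eq_right]
  refine ⟨Or.inl, ?_⟩
  rintro (hs | ⟨i, j, hij, -, hi, rfl⟩)
  · exact hs
  · have hq := ZMod.val_lt q
    rw [zero_add] at hi
    obtain rfl : j = 0 := by
      have := (ZMod.natCast_eq_neg_one_iff (by omega)).1 hi
      omega
    rw [← ZMod.natCast_zmod_val q, hij, add_zero, hi] at h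
    simpa using h rfl

end SquareWitness

/-- For every integer `n ≥ 3`, there exists a DFA `M` with exactly `n` states over the
two-letter alphabet `{0,1}` (here `Fin 2`) such that every DFA accepting the language
`L(M) * L(M)` has at least `n * 2^n - 2^(n-1)` states. -/
theorem square_state_complexity_lower_bound (n : ℕ) (hn : 3 ≤ n) :
    ∃ (σ : Type) (_ : Fintype σ) (M : DFA (Fin 2) σ),
      Fintype.card σ = n ∧
      ∀ (τ : Type) [Fintype τ] (N : DFA (Fin 2) τ),
        N.accepts = M.accepts * M.accepts →
        n * 2 ^ n - 2 ^ (n - 1) ≤ Fintype.card τ := by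
  have : NeZero n := ⟨by omega⟩
  refine ⟨ZMod n, inferInstance, SquareWitness.dfa n, ZMod.card n, fun τ _ N hN => ?_⟩
  rw [← DFA.accepts_concat] at hN
  calc n * 2 ^ n - 2 ^ (n - 1)
      = (Finset.univ.filter fun p : ZMod n × Finset (ZMod n) => p.1 = -1 → 0 ∈ p.2).card := by
        rw [card_filter_fst_eq_imp_mem_snd, ZMod.card]
    _ ≤ Fintype.card τ :=
        DFA.card_le_of_accepts_eq hN
          (fun _ hp => SquareWitness.mem_range_eval hn (Finset.mem_filter.1 hp).2)
          (SquareWitness.squareDFA_acceptsFrom_injective hn).injOn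
end

section
/- Fix an integer n ≥ 3 and let M be the DFA over the alphabet {0,1} with state set {0,1,…,n−1}, start state 0, set of final states {n−1}, and transition function δ given by: δ(1,0) = 0; δ(i,0) = i for all i ≠ 1; and δ(i,1) = (i+1) mod n for all i. Then every DFA accepting the language L(M)·L(M) has at least n·2^n − 2^(n−1) states. -/
/-!
Run the classical automaton for `L·L` on top of `M`: its states are pairs `(i, S)`, where `i` is
the state of `M` and `S` the set of states `M` reaches on the suffixes following an accepted
prefix. For the witness automaton all pairs with `i = n - 1 → 0 ∈ S` are reachable: the letter
`1` rotates both components, and `1 0` read in state `0` rotates `S` alone as long as `0 ∉ S`,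
which builds `S` one element at a time. Distinct pairs have distinct residual languages (words
`1^k 0 1^(2n-2)` separate the first components, words `1^m` the second), so a DFA for `L·L` needs
at least as many states as there are such pairs, namely `n 2^n - 2^(n-1)`.
-/

open Pointwise
open scoped Fin.CommRing

namespace DFA

variable {α σ β τ : Type*}

/-- The automaton for `M.accepts * M.accepts`: the first component runs `M`, the second is the
set of states `M` reaches on the suffixes that follow an accepted prefix. -/
@[simps]
def square (M : DFA α σ) : DFA α (σ × Set σ) where
  step p a :=
    (M.step p.1 a, (M.step · a) '' p.2 ∪ {q | M.step p.1 a ∈ M.accept ∧ q = M.start})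
  start := (M.start, {q | M.start ∈ M.accept ∧ q = M.start})
  accept := {p | ∃ q ∈ p.2, q ∈ M.accept}

theorem mem_acceptsFrom_square (M : DFA α σ) (i : σ) (S : Set σ) (z : List α) :
    z ∈ M.square.acceptsFrom (i, S) ↔ (∃ q ∈ S, z ∈ M.acceptsFrom q) ∨
      ∃ u v, u ++ v = z ∧ u ≠ [] ∧ u ∈ M.acceptsFrom i ∧ v ∈ M.accepts := by
  induction z generalizing i S with
  | nil => simp [mem_acceptsFrom, square]
  | cons a z ih =>
    rw [mem_acceptsFrom, evalFrom_cons, ← mem_acceptsFrom, square_step, ih]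
    simp only [Set.mem_union, Set.mem_image, Set.mem_ofPred_eq, mem_acceptsFrom, evalFrom_cons]
    constructor
    · rintro (⟨q, (⟨q, hq, rfl⟩ | ⟨hi, rfl⟩), hz⟩ | ⟨u, v, rfl, hu, hui, hv⟩)
      · exact .inl ⟨q, hq, hz⟩
      · exact .inr ⟨[a], z, rfl, by simp, hi, hz⟩
      · exact .inr ⟨a :: u, v, rfl, by simp, hui, hv⟩
    · rintro (⟨q, hq, hz⟩ | ⟨_ | ⟨b, u⟩, v, huv, hu, hui, hv⟩)
      · exact .inl ⟨_, .inl ⟨q, hq, rfl⟩, hz⟩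
      · exact absurd rfl hu
      · obtain ⟨rfl, rfl⟩ := List.cons_eq_cons.1 huv
        rcases u with _ | ⟨c, u⟩
        · exact .inl ⟨M.start, .inr ⟨hui, rfl⟩, hv⟩
        · exact .inr ⟨c :: u, v, rfl, by simp, hui, hv⟩

theorem accepts_square (M : DFA α σ) : M.square.accepts = M.accepts * M.accepts := by
  ext z
  rw [accepts, square_start, mem_acceptsFrom_square, Language.mem_mul]
  constructor
  · rintro (⟨q, ⟨h0, rfl⟩, hz⟩ | ⟨u, v, huv, -, hu, hv⟩)
    · exact ⟨[], h0, z, hz, rfl⟩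
    · exact ⟨u, hu, v, hv, huv⟩
  · rintro ⟨_ | ⟨a, u⟩, hu, v, hv, rfl⟩
    · exact .inl ⟨M.start, ⟨hu, rfl⟩, hv⟩
    · exact .inr ⟨a :: u, v, rfl, by simp, hu, hv⟩

theorem step_mem_range_eval {P : DFA α β} {p : β} (hp : p ∈ Set.range P.eval) (a : α) :
    P.step p a ∈ Set.range P.eval := by
  obtain ⟨w, rfl⟩ := hp
  exact ⟨w ++ [a], eval_append_singleton P w a⟩

theorem ncard_le_card_of_accepts_eq (P : DFA α β) (N : DFA α τ) [Finite τ]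
    (h : N.accepts = P.accepts) {X : Set β} (hreach : X ⊆ Set.range P.eval)
    (hinj : X.InjOn P.acceptsFrom) : X.ncard ≤ Nat.card τ := by
  choose w hw using fun x : X => hreach x.2
  refine Nat.card_le_card_of_injective (fun x => N.eval (w x)) fun x y hxy => Subtype.ext ?_
  refine hinj x.2 y.2 ?_
  rw [← hw x, ← hw y, ← Language.leftQuotient_accepts_apply,
    ← Language.leftQuotient_accepts_apply, ← h, Language.leftQuotient_accepts_apply,
    Language.leftQuotient_accepts_apply]
  exact congrArg N.acceptsFrom hxy

end DFA

theorem Set.ncard_setOf_eq_imp_mem {ι α : Type*} [Finite ι] [Finite α] (i₀ : ι) (a : α) :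
    {p : ι × Set α | p.1 = i₀ → a ∈ p.2}.ncard =
      Nat.card ι * 2 ^ Nat.card α - 2 ^ (Nat.card α - 1) := by
  have hcompl : {p : ι × Set α | p.1 = i₀ → a ∈ p.2}ᶜ = {i₀} ×ˢ 𝒫 {a}ᶜ := by
    ext ⟨i, S⟩
    simp [Set.subset_compl_singleton_iff]
  have hsum := Set.ncard_add_ncard_compl {p : ι × Set α | p.1 = i₀ → a ∈ p.2}
  have ha : ({a}ᶜ : Set α).ncard = Nat.card α - 1 := by
    rw [Set.ncard_compl, Set.ncard_singleton]
  have : Fintype α := Fintype.ofFinite α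
  rw [hcompl, Set.ncard_prod, Set.ncard_singleton, Set.ncard_powerset, ha, Nat.card_prod,
    Nat.card_eq_fintype_card (α := Set α), Fintype.card_set, ← Nat.card_eq_fintype_card] at hsum
  omega

namespace Fin

variable {n : ℕ} [NeZero n]

theorem natCast_ne_zero_of_lt {k : ℕ} (hk : k ≠ 0) (hkn : k < n) : (k : Fin n) ≠ 0 :=
  fun h => hk (Nat.eq_zero_of_dvd_of_lt (natCast_eq_zero.1 h) hkn)

theorem natCast_pred_eq_neg_one : ((n - 1 : ℕ) : Fin n) = -1 := by
  rw [Nat.cast_pred (Nat.pos_of_neZero n), CharP.cast_eq_zero, zero_sub]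

theorem val_neg_one_eq_pred : ((-1 : Fin n) : ℕ) = n - 1 := by
  rw [← natCast_pred_eq_neg_one, val_natCast,
    Nat.mod_eq_of_lt (Nat.sub_lt (Nat.pos_of_neZero n) Nat.one_pos)]

theorem zero_ne_neg_one_of_two_le (hn : 2 ≤ n) : (0 : Fin n) ≠ -1 := fun h =>
  natCast_ne_zero_of_lt (n := n) (k := 1) one_ne_zero hn (by push_cast; linear_combination h)

theorem zero_ne_one_of_two_le (hn : 2 ≤ n) : (0 : Fin n) ≠ 1 := fun h =>
  natCast_ne_zero_of_lt (n := n) (k := 1) one_ne_zero hn (by push_cast; linear_combination -h)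

theorem one_ne_neg_one_of_three_le (hn : 3 ≤ n) : (1 : Fin n) ≠ -1 := fun h =>
  natCast_ne_zero_of_lt (n := n) (k := 2) two_ne_zero hn (by push_cast; linear_combination h)

end Fin

def witnessDFA (n : ℕ) [NeZero n] : DFA (Fin 2) (Fin n) where
  step i c := if c = 0 then (if i = 1 then 0 else i) else i + 1
  start := 0
  accept := {-1}

theorem eq_witnessDFA {n : ℕ} [NeZero n] (hn : 3 ≤ n) (M : DFA (Fin 2) (Fin n))
    (hstep0 : ∀ i : Fin n, ((M.step i 0 : Fin n) : ℕ) = if (i : ℕ) = 1 then 0 else (i : ℕ))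
    (hstep1 : ∀ i : Fin n, ((M.step i 1 : Fin n) : ℕ) = ((i : ℕ) + 1) % n)
    (hstart : ((M.start : Fin n) : ℕ) = 0)
    (haccept : M.accept = {i : Fin n | (i : ℕ) = n - 1}) :
    M = witnessDFA n := by
  have hval1 : ((1 : Fin n) : ℕ) = 1 := by rw [Fin.val_one', Nat.mod_eq_of_lt (by omega)]
  have hstep : M.step = (witnessDFA n).step := by
    refine funext₂ fun i c => Fin.ext ?_
    fin_cases c
    · simp only [hstep0, witnessDFA, Fin.zero_eta, if_true, ← hval1, Fin.val_inj]
      split <;> simp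
    · simp [hstep1, witnessDFA, Fin.val_add]
  have hstart' : M.start = 0 := Fin.ext hstart
  have haccept' : M.accept = {-1} := by
    ext i
    simp [haccept, ← Fin.val_neg_one_eq_pred, Fin.val_inj]
  cases M
  simp_all [witnessDFA]

namespace witnessDFA

variable {n : ℕ} [NeZero n]

theorem square_step_one (i : Fin n) (S : Set (Fin n)) :
    (witnessDFA n).square.step (i, S) 1 =
      (i + 1, ((1 : Fin n) +ᵥ S) ∪ {q | i + 1 = -1 ∧ q = 0}) := by
  ext x
  · simp [witnessDFA]
  · simp [witnessDFA, Set.mem_vadd_set_iff_neg_vadd_mem, add_comm]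

theorem rotate_mem_range {i : Fin n} {S : Set (Fin n)}
    (h : (i, S) ∈ Set.range (witnessDFA n).square.eval) (hi : i + 1 ≠ -1) :
    (i + 1, (1 : Fin n) +ᵥ S) ∈ Set.range (witnessDFA n).square.eval := by
  have := DFA.step_mem_range_eval h 1
  rw [square_step_one] at this
  simpa [hi] using this

theorem wrap_mem_range {i : Fin n} {S : Set (Fin n)}
    (h : (i, S) ∈ Set.range (witnessDFA n).square.eval) (hi : i + 1 = -1) :
    (-1, insert 0 ((1 : Fin n) +ᵥ S)) ∈ Set.range (witnessDFA n).square.eval := by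
  have := DFA.step_mem_range_eval h 1
  rw [square_step_one] at this
  simpa [hi] using this

theorem collapse_mem_range (hn : 2 ≤ n) {S : Set (Fin n)}
    (h : (1, S) ∈ Set.range (witnessDFA n).square.eval) (hS : 1 ∉ S) :
    (0, S) ∈ Set.range (witnessDFA n).square.eval := by
  have hfix : Set.EqOn ((witnessDFA n).step · 0) id S := fun x hx => by
    simp [witnessDFA, show x ≠ 1 from fun h => hS (h ▸ hx)]
  have := DFA.step_mem_range_eval h 0
  rw [DFA.square_step, Set.image_congr hfix, Set.image_id] at this
  simpa [witnessDFA, Fin.zero_ne_neg_one_of_two_le hn] using this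

theorem mem_range_of_ne_neg_one {S : Set (Fin n)}
    (h : (0, S) ∈ Set.range (witnessDFA n).square.eval) {i : Fin n} (hi : i ≠ -1) :
    (i, i +ᵥ S) ∈ Set.range (witnessDFA n).square.eval := by
  have rotate_iterate : ∀ j : ℕ, j + 1 < n →
      ((j : Fin n), (j : Fin n) +ᵥ S) ∈ Set.range (witnessDFA n).square.eval := by
    intro j hj
    induction j with
    | zero => simpa using h
    | succ j ih =>
      have hne : (j : Fin n) + 1 ≠ -1 := fun h => Fin.natCast_ne_zero_of_lt (n := n) (k := j + 2)
        (by omega) hj (by push_cast; linear_combination h)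
      simpa [vadd_vadd, add_comm] using rotate_mem_range (ih (by omega)) hne
  have hlt : (i : ℕ) + 1 < n := by
    have : (i : ℕ) ≠ n - 1 := fun h => hi (Fin.ext (h.trans Fin.val_neg_one_eq_pred.symm))
    omega
  simpa using rotate_iterate i hlt

theorem neg_one_mem_range (hn : 2 ≤ n) {S : Set (Fin n)}
    (h : (0, S) ∈ Set.range (witnessDFA n).square.eval) :
    (-1, insert 0 ((-1 : Fin n) +ᵥ S)) ∈ Set.range (witnessDFA n).square.eval := by
  have hne : (-2 : Fin n) ≠ -1 := fun h =>
    Fin.zero_ne_neg_one_of_two_le hn (by linear_combination -h)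
  have := wrap_mem_range (mem_range_of_ne_neg_one h hne) (by ring)
  rwa [vadd_vadd, show (1 : Fin n) + -2 = -1 by ring] at this

theorem insert_one_mem_range (hn : 2 ≤ n) {S : Set (Fin n)}
    (h : (0, S) ∈ Set.range (witnessDFA n).square.eval) :
    (0, insert 1 S) ∈ Set.range (witnessDFA n).square.eval := by
  have := rotate_mem_range (neg_one_mem_range hn h)
    (by simpa using Fin.zero_ne_neg_one_of_two_le hn)
  simpa [Set.vadd_set_insert, vadd_vadd] using this

theorem shift_mem_range (hn : 3 ≤ n) {S : Set (Fin n)}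
    (h : (0, S) ∈ Set.range (witnessDFA n).square.eval) (hS : 0 ∉ S) :
    (0, (1 : Fin n) +ᵥ S) ∈ Set.range (witnessDFA n).square.eval := by
  refine collapse_mem_range (by omega) ?_
    (by simpa [Set.mem_vadd_set_iff_neg_vadd_mem] using hS)
  simpa using rotate_mem_range h (by simpa using Fin.one_ne_neg_one_of_three_le hn)

theorem shift_iterate_mem_range (hn : 3 ≤ n) {S : Set (Fin n)}
    (h : (0, S) ∈ Set.range (witnessDFA n).square.eval) (k : ℕ)
    (hk : ∀ t < k, (0 : Fin n) ∉ (t : Fin n) +ᵥ S) :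
    (0, (k : Fin n) +ᵥ S) ∈ Set.range (witnessDFA n).square.eval := by
  induction k with
  | zero => simpa using h
  | succ k ih =>
    have := shift_mem_range hn (ih fun t ht => hk t (by omega)) (hk k (by omega))
    simpa [vadd_vadd, add_comm] using this

/-- With `k` least such that `k + 1 ∈ S`, the set `-k + S` contains `1`; it is obtained from
`(-k + S) \ {1}` by inserting `1`, and shifting it `k` times gives back `S`: the minimality of `k`
keeps `0` out of every intermediate set. -/
theorem zero_mem_range (hn : 3 ≤ n) (S : Set (Fin n)) :
    (0, S) ∈ Set.range (witnessDFA n).square.eval := by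
  induction hm : S.ncard using Nat.strong_induction_on generalizing S with
  | _ m ih =>
  rcases S.eq_empty_or_nonempty with rfl | ⟨s, hs⟩
  · exact ⟨[], by simp [witnessDFA, show n ≠ 1 by omega]⟩
  classical
  have hex : ∃ k : ℕ, (k : Fin n) + 1 ∈ S := ⟨(s - 1 : Fin n), by simpa using hs⟩
  set k := Nat.find hex
  set T := -(k : Fin n) +ᵥ S
  have h1T : (1 : Fin n) ∈ T := by
    simpa [T, Set.mem_vadd_set_iff_neg_vadd_mem, add_comm] using Nat.find_spec hex
  have hlt : (T \ {1}).ncard < m := by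
    rw [← hm, ← Set.ncard_vadd_set (-(k : Fin n)) S]
    exact Set.ncard_sdiff_singleton_lt_of_mem h1T
  have hT := insert_one_mem_range (by omega) (ih _ hlt _ rfl)
  rw [Set.insert_sdiff_singleton, Set.insert_eq_of_mem h1T] at hT
  have := shift_iterate_mem_range hn hT k fun t ht h0 => by
    refine Nat.find_min hex (m := k - t - 1) (by omega) ?_
    have hcast : ((k - t - 1 : ℕ) : Fin n) + 1 = k + -t := by
      rw [Nat.sub_sub, Nat.cast_sub (by omega)]; push_cast; ring
    simpa [T, Set.mem_vadd_set_iff_neg_vadd_mem, hcast] using h0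
  simpa [T, vadd_vadd] using this

theorem mem_range_of_imp (hn : 3 ≤ n) {i : Fin n} {S : Set (Fin n)} (h : i = -1 → 0 ∈ S) :
    (i, S) ∈ Set.range (witnessDFA n).square.eval := by
  by_cases hi : i = -1
  · subst hi
    simpa [vadd_vadd, h rfl] using
      neg_one_mem_range (by omega) (zero_mem_range hn ((1 : Fin n) +ᵥ S))
  · simpa [vadd_vadd] using mem_range_of_ne_neg_one (zero_mem_range hn (-i +ᵥ S)) hi

theorem mem_acceptsFrom_iff {q : Fin n} {x : List (Fin 2)} :
    x ∈ (witnessDFA n).acceptsFrom q ↔ (witnessDFA n).evalFrom q x = -1 := Iff.rfl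

theorem evalFrom_replicate_one (q : Fin n) (m : ℕ) :
    (witnessDFA n).evalFrom q (List.replicate m 1) = q + m := by
  induction m generalizing q with
  | zero => simp
  | succ m ih =>
    rw [List.replicate_succ, DFA.evalFrom_cons, ih]
    simp only [witnessDFA, Fin.one_eq_zero_iff, OfNat.ofNat_ne_one, if_false]
    push_cast; ring

theorem replicate_one_mem_accepts_iff (m : ℕ) :
    List.replicate m 1 ∈ (witnessDFA n).accepts ↔ n ∣ m + 1 := by
  rw [DFA.accepts, mem_acceptsFrom_iff, evalFrom_replicate_one, ← Fin.natCast_eq_zero]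
  simp only [witnessDFA, zero_add, Nat.cast_add, Nat.cast_one]
  exact ⟨fun h => by rw [h]; ring, fun h => by linear_combination h⟩

theorem evalFrom_append_zero_replicate (q : Fin n) (w : List (Fin 2)) (m : ℕ) :
    (witnessDFA n).evalFrom q (w ++ 0 :: List.replicate m 1) =
      (witnessDFA n).step ((witnessDFA n).evalFrom q w) 0 + m := by
  rw [DFA.evalFrom_of_append, DFA.evalFrom_cons, evalFrom_replicate_one]

theorem step_zero_eq_zero_iff (i : Fin n) : (witnessDFA n).step i 0 = 0 ↔ i = 0 ∨ i = 1 := by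
  by_cases hi : i = 1 <;> simp [witnessDFA, hi]

theorem step_zero_ne_one (hn : 2 ≤ n) (i : Fin n) : (witnessDFA n).step i 0 ≠ 1 := by
  by_cases hi : i = 1 <;> simp [witnessDFA, hi, Fin.zero_ne_one_of_two_le hn]

theorem append_zero_replicate_not_mem_acceptsFrom (hn : 2 ≤ n) (q : Fin n) (w : List (Fin 2)) :
    w ++ 0 :: List.replicate (n - 1 + (n - 1)) 1 ∉ (witnessDFA n).acceptsFrom q := by
  rw [mem_acceptsFrom_iff, evalFrom_append_zero_replicate, Nat.cast_add,
    Fin.natCast_pred_eq_neg_one]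
  exact fun h => step_zero_ne_one hn _ (by linear_combination h)

/-- The separating word is `1^k 0 1^(2n-2)` with `i + k = 1`. From `(i, S)` its prefix
`1^k 0 1^(n-1)` leads to `n - 1` and is followed by the accepted `1^(n-1)`. From `(j, T)` the only
split with an accepted suffix is the same one, and there the prefix leads to `n - 1` only when
`j + k ∈ {0, 1}`. -/
theorem square_acceptsFrom_ne_of_fst (hn : 2 ≤ n) {i j : Fin n} (hji : j ≠ i)
    (hji' : j ≠ i - 1) (S T : Set (Fin n)) :
    (witnessDFA n).square.acceptsFrom (i, S) ≠ (witnessDFA n).square.acceptsFrom (j, T) := by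
  set k := ((1 - i : Fin n) : ℕ)
  have hk : (k : Fin n) = 1 - i := Fin.cast_val_eq_self _
  intro hEq
  have hz : List.replicate k 1 ++ 0 :: List.replicate (n - 1 + (n - 1)) 1 ∈
      (witnessDFA n).square.acceptsFrom (i, S) := by
    refine (DFA.mem_acceptsFrom_square _ _ _ _).2 <| .inr
      ⟨List.replicate k 1 ++ 0 :: List.replicate (n - 1) 1, List.replicate (n - 1) 1,
        by rw [List.replicate_add]; simp, by simp, ?_, ?_⟩
    · rw [mem_acceptsFrom_iff, evalFrom_append_zero_replicate, evalFrom_replicate_one, hk,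
        add_sub_cancel, Fin.natCast_pred_eq_neg_one]
      simp [witnessDFA]
    · rw [replicate_one_mem_accepts_iff, Nat.sub_add_cancel (by omega)]
  rw [hEq, DFA.mem_acceptsFrom_square] at hz
  rcases hz with ⟨q, -, hq⟩ | ⟨u, v, huv, -, hu, hv⟩
  · exact append_zero_replicate_not_mem_acceptsFrom hn q _ hq
  rcases List.append_eq_append_iff.1 huv with ⟨a, -, rfl⟩ | ⟨_ | ⟨b, c⟩, rfl, hc⟩
  · exact append_zero_replicate_not_mem_acceptsFrom hn 0 a hv
  · rw [List.nil_append] at hc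
    exact append_zero_replicate_not_mem_acceptsFrom hn 0 [] (hc ▸ hv)
  obtain ⟨rfl, hcv⟩ := List.cons_eq_cons.1 hc
  obtain ⟨hlen, hc, hv'⟩ := List.append_eq_replicate_iff.1 hcv.symm
  rw [hv', replicate_one_mem_accepts_iff] at hv
  have hvlen := Nat.eq_of_dvd_of_lt_two_mul (by omega) hv (by omega)
  rw [hc, show c.length = n - 1 by omega, mem_acceptsFrom_iff, evalFrom_append_zero_replicate,
    evalFrom_replicate_one, hk, Fin.natCast_pred_eq_neg_one] at hu
  rcases (step_zero_eq_zero_iff _).1 (by linear_combination hu) with h | h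
  · exact hji' (by linear_combination h)
  · exact hji (by linear_combination h)

theorem square_acceptsFrom_ne_of_snd {i q : Fin n} {S T : Set (Fin n)} (hS : q ∈ S)
    (hT : q ∉ T) :
    (witnessDFA n).square.acceptsFrom (i, S) ≠ (witnessDFA n).square.acceptsFrom (i, T) := by
  set m := ((-1 - q : Fin n) : ℕ)
  have hm : (m : Fin n) = -1 - q := Fin.cast_val_eq_self _
  intro hEq
  have hz : List.replicate m 1 ∈ (witnessDFA n).square.acceptsFrom (i, S) :=
    (DFA.mem_acceptsFrom_square _ _ _ _).2 <| .inl
      ⟨q, hS, by rw [mem_acceptsFrom_iff, evalFrom_replicate_one, hm]; ring⟩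
  rw [hEq, DFA.mem_acceptsFrom_square] at hz
  rcases hz with ⟨q', hq', hz⟩ | ⟨u, v, huv, hu, -, hv⟩
  · rw [mem_acceptsFrom_iff, evalFrom_replicate_one, hm] at hz
    exact hT (by convert hq' using 1; linear_combination -hz)
  · obtain ⟨hlen, -, hv'⟩ := List.append_eq_replicate_iff.1 huv
    rw [hv', replicate_one_mem_accepts_iff] at hv
    have hu := List.length_pos_iff.2 hu
    have hm := (-1 - q : Fin n).is_lt
    have := Nat.eq_zero_of_dvd_of_lt hv (by omega)
    omega

theorem square_acceptsFrom_injective (hn : 3 ≤ n) :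
    Function.Injective (witnessDFA n).square.acceptsFrom := by
  rintro ⟨i, S⟩ ⟨j, T⟩ h
  obtain rfl : i = j := by
    by_contra hij
    by_cases hji : j = i - 1
    · refine square_acceptsFrom_ne_of_fst (by omega) hij (fun h' => ?_) T S h.symm
      exact Fin.one_ne_neg_one_of_three_le hn (by linear_combination h' + hji)
    · exact square_acceptsFrom_ne_of_fst (by omega) (Ne.symm hij) hji S T h
  obtain rfl : S = T := Set.ext fun q =>
    ⟨fun hS => by_contra fun hT => square_acceptsFrom_ne_of_snd hS hT h,
     fun hT => by_contra fun hS => square_acceptsFrom_ne_of_snd hT hS h.symm⟩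
  rfl

end witnessDFA

/-- Fix `n ≥ 3` and let `M` be the DFA over `{0,1}` (here `Fin 2`) with states
`{0,…,n-1}` (here `Fin n`), start state `0`, final states `{n-1}`, and transitions
`δ(1,0) = 0`, `δ(i,0) = i` for `i ≠ 1`, and `δ(i,1) = (i+1) mod n`. Then every DFA
accepting `L(M) * L(M)` has at least `n * 2^n - 2^(n-1)` states. -/
theorem witness_square_lower_bound (n : ℕ) (hn : 3 ≤ n) (M : DFA (Fin 2) (Fin n))
    (hstep0 : ∀ i : Fin n, ((M.step i 0 : Fin n) : ℕ) = if (i : ℕ) = 1 then 0 else (i : ℕ))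
    (hstep1 : ∀ i : Fin n, ((M.step i 1 : Fin n) : ℕ) = ((i : ℕ) + 1) % n)
    (hstart : ((M.start : Fin n) : ℕ) = 0)
    (haccept : M.accept = {i : Fin n | (i : ℕ) = n - 1}) :
    ∀ (τ : Type) [Fintype τ] (N : DFA (Fin 2) τ),
      N.accepts = M.accepts * M.accepts →
      n * 2 ^ n - 2 ^ (n - 1) ≤ Fintype.card τ := by
  intro τ _ N hN
  have : NeZero n := ⟨by omega⟩
  obtain rfl := eq_witnessDFA hn M hstep0 hstep1 hstart haccept
  have hcount := Set.ncard_setOf_eq_imp_mem (-1 : Fin n) (0 : Fin n)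
  rw [Nat.card_eq_fintype_card, Fintype.card_fin] at hcount
  rw [← hcount, ← Nat.card_eq_fintype_card]
  exact DFA.ncard_le_card_of_accepts_eq _ N (hN.trans (DFA.accepts_square _).symm)
    (fun _ hp => witnessDFA.mem_range_of_imp hn hp)
    (witnessDFA.square_acceptsFrom_injective hn).injOn
end

section
/- Let L be a language over a one-letter (unary) alphabet accepted by a DFA with n states. Then for every integer k ≥ 2, there exists a DFA with at most k·n − k + 1 states accepting the language L^k (the k-fold concatenation of L with itself). -/
/-!
On the words `aᵐ` a unary DFA with `n` states runs through a tail of length `t` followed by a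
cycle of length `p ≥ 1`, with `t + p ≤ n`; so the set of lengths of its language is periodic with
period `p` from `t` on. In a sum of `k` such lengths that is at least `k t + (k - 1)(p - 1)`, some
summand is at least `t` and can be shifted by `p` (and conversely after adding `p`), so the length
set of `L^k` is periodic with period `p` from `k t + (k - 1)(p - 1)` on. A tail-plus-cycle DFA
then accepts `L^k` with `k t + (k - 1)(p - 1) + p ≤ k n - k + 1` states.
-/

open Pointwise

def Set.PeriodicFrom (S : Set ℕ) (t p : ℕ) : Prop :=
  ∀ m, t ≤ m → (m ∈ S ↔ m + p ∈ S)

namespace Set.PeriodicFrom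

variable {S T : Set ℕ} {a b p : ℕ}

theorem mem_iff_add_mul (h : S.PeriodicFrom a p) (c : ℕ) {m : ℕ} (hm : a ≤ m) :
    m ∈ S ↔ m + p * c ∈ S := by
  induction c with
  | zero => simp
  | succ c ih => rw [ih, h _ (by omega), mul_add_one, add_assoc]

theorem mem_iff_of_modEq (h : S.PeriodicFrom a p) {m m' : ℕ} (hm : a ≤ m) (hm' : a ≤ m')
    (hmod : m ≡ m' [MOD p]) : m ∈ S ↔ m' ∈ S := by
  wlog hle : m ≤ m' generalizing m m'
  · exact (this hm' hm hmod.symm (le_of_not_ge hle)).symm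
  obtain ⟨c, hc⟩ := (Nat.modEq_iff_dvd' hle).1 hmod
  rw [h.mem_iff_add_mul c hm, ← hc, Nat.add_sub_cancel' hle]

theorem add (hS : S.PeriodicFrom a p) (hT : T.PeriodicFrom b p) :
    (S + T).PeriodicFrom (a + b + (p - 1)) p := by
  intro m hm
  simp only [Set.mem_add]
  constructor
  · rintro ⟨x, hx, y, hy, rfl⟩
    by_cases hxa : a ≤ x
    · exact ⟨x + p, (hS x hxa).1 hx, y, hy, by omega⟩
    · exact ⟨x, hx, y + p, (hT y (by omega)).1 hy, by omega⟩
  · rintro ⟨x, hx, y, hy, hxy⟩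
    by_cases hxa : a + p ≤ x
    · refine ⟨x - p, (hS (x - p) (by omega)).2 ?_, y, hy, by omega⟩
      rwa [Nat.sub_add_cancel (by omega)]
    · refine ⟨x, hx, y - p, (hT (y - p) (by omega)).2 ?_, by omega⟩
      rwa [Nat.sub_add_cancel (by omega)]

theorem nsmul (h : S.PeriodicFrom a p) (k : ℕ) :
    ((k + 1) • S).PeriodicFrom ((k + 1) * a + k * (p - 1)) p := by
  induction k with
  | zero => simpa using h
  | succ k ih =>
    rw [succ_nsmul]
    convert ih.add h using 1
    ring

end Set.PeriodicFrom

namespace Language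

variable {α : Type*}

def lengths (L : Language α) : Set ℕ := List.length '' L

theorem lengths_one : (1 : Language α).lengths = {0} := by
  simp [lengths, one_def]

theorem lengths_mul (L M : Language α) : (L * M).lengths = L.lengths + M.lengths := by
  ext m
  simp only [lengths, Set.mem_add]
  constructor
  · rintro ⟨_, ⟨u, hu, v, hv, rfl⟩, rfl⟩
    exact ⟨_, ⟨u, hu, rfl⟩, _, ⟨v, hv, rfl⟩, (List.length_append).symm⟩
  · rintro ⟨_, ⟨u, hu, rfl⟩, _, ⟨v, hv, rfl⟩, rfl⟩
    exact ⟨u ++ v, ⟨u, hu, v, hv, rfl⟩, List.length_append⟩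

theorem lengths_pow (L : Language α) (k : ℕ) : (L ^ k).lengths = k • L.lengths := by
  induction k with
  | zero => exact lengths_one
  | succ k ih => rw [pow_succ, lengths_mul, ih, succ_nsmul]

theorem mem_iff_length_mem_lengths [Subsingleton α] {L : Language α} {w : List α} :
    w ∈ L ↔ w.length ∈ L.lengths := by
  refine ⟨Set.mem_image_of_mem _, fun ⟨v, hv, hvw⟩ => ?_⟩
  rwa [← List.ext_getElem hvw fun _ _ _ => Subsingleton.elim _ _]

end Language

theorem Fintype.exists_iterate_add_eq_iterate {σ : Type*} [Fintype σ] (f : σ → σ) (x : σ) :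
    ∃ t p, 0 < p ∧ t + p ≤ Fintype.card σ ∧ ∀ m, t ≤ m → f^[m + p] x = f^[m] x := by
  obtain ⟨i, j, hij, hfij⟩ := Fintype.exists_ne_map_eq_of_card_lt
    (fun i : Fin (Fintype.card σ + 1) => f^[i] x) (by simp)
  wlog hlt : i < j generalizing i j
  · exact this j i hij.symm hfij.symm (lt_of_le_of_ne (not_lt.1 hlt) hij.symm)
  refine ⟨i, j - i, by omega, by omega, fun m hm => ?_⟩
  have hper : Function.IsPeriodicPt f (j - i) (f^[i] x) := by
    change f^[j - i] (f^[i] x) = f^[i] x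
    rw [← Function.iterate_add_apply, Nat.sub_add_cancel hlt.le]
    exact hfij.symm
  obtain ⟨c, rfl⟩ := Nat.exists_eq_add_of_le hm
  calc f^[i + c + (j - i)] x = f^[c] (f^[j - i] (f^[i] x)) := by
        rw [← Function.iterate_add_apply, ← Function.iterate_add_apply]; congr 1; omega
    _ = f^[i + c] x := by rw [hper.eq, ← Function.iterate_add_apply, add_comm]

namespace DFA

variable {α σ : Type*}

theorem eval_replicate (M : DFA α σ) (a : α) (m : ℕ) :
    M.eval (List.replicate m a) = (M.step · a)^[m] M.start := by
  induction m with
  | zero => rfl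
  | succ m ih =>
    rw [List.replicate_succ', eval_append_singleton, ih, Function.iterate_succ_apply']

theorem exists_periodicFrom_lengths_accepts [Unique α] [Fintype σ] (M : DFA α σ) :
    ∃ t p, 0 < p ∧ t + p ≤ Fintype.card σ ∧ M.accepts.lengths.PeriodicFrom t p := by
  obtain ⟨t, p, hp, htp, hiter⟩ :=
    Fintype.exists_iterate_add_eq_iterate (M.step · default) M.start
  have hmem (m : ℕ) : m ∈ M.accepts.lengths ↔ (M.step · default)^[m] M.start ∈ M.accept := by
    rw [← eval_replicate, ← mem_accepts, Language.mem_iff_length_mem_lengths,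
      List.length_replicate]
  exact ⟨t, p, hp, htp, fun m hm => by rw [hmem, hmem, hiter m hm]⟩

def lasso (t p : ℕ) (hp : 0 < p) (S : Set ℕ) : DFA α (Fin (t + p)) where
  step i _ := if h : (i : ℕ) + 1 < t + p then ⟨i + 1, h⟩ else ⟨t, by omega⟩
  start := ⟨0, by omega⟩
  accept := {i | (i : ℕ) ∈ S}

theorem lasso_eval (t p : ℕ) (hp : 0 < p) (S : Set ℕ) (w : List α) :
    ((lasso t p hp S).eval w : ℕ) = w.length ∨
      t ≤ ((lasso t p hp S).eval w : ℕ) ∧ t ≤ w.length ∧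
        ((lasso t p hp S).eval w : ℕ) ≡ w.length [MOD p] := by
  induction w using List.reverseRecOn with
  | nil => exact Or.inl rfl
  | append_singleton w a ih =>
    rw [eval_append_singleton, List.length_append, List.length_singleton]
    set q := (lasso t p hp S).eval w
    simp only [lasso]
    split_ifs with h
    · rcases ih with ih | ⟨hq, hw, hmod⟩
      · exact Or.inl (by simp [ih])
      · exact Or.inr ⟨by simp; omega, by omega, hmod.add_right 1⟩
    · have hq : (q : ℕ) + 1 = t + p := by omega
      refine Or.inr ⟨le_rfl, ?_⟩
      rcases ih with ih | ⟨-, hw, hmod⟩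
      · exact ⟨by omega, by rw [← ih, hq]; exact Nat.add_modEq_right.symm⟩
      · refine ⟨by omega, ?_⟩
        calc t ≡ t + p [MOD p] := Nat.add_modEq_right.symm
          _ = q + 1 := hq.symm
          _ ≡ w.length + 1 [MOD p] := hmod.add_right 1

theorem lasso_accepts {t p : ℕ} (hp : 0 < p) {S : Set ℕ} (hS : S.PeriodicFrom t p) :
    (lasso t p hp S : DFA α _).accepts = {w | w.length ∈ S} := by
  ext w
  change ((lasso t p hp S).eval w : ℕ) ∈ S ↔ w.length ∈ S
  rcases lasso_eval t p hp S w with h | ⟨hq, hw, hmod⟩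
  · rw [h]
  · exact hS.mem_iff_of_modEq hq hw hmod

end DFA

/-- Let `L` be a language over a one-letter alphabet (here `Fin 1`) accepted by a DFA
with `n` states. Then for every `k ≥ 2` there is a DFA with at most `k*n - k + 1`
states accepting the `k`-fold concatenation `L^k`. -/
theorem unary_power_upper_bound (σ : Type) [Fintype σ] (M : DFA (Fin 1) σ)
    (n : ℕ) (hn : Fintype.card σ = n) (L : Language (Fin 1)) (hL : L = M.accepts)
    (k : ℕ) (hk : 2 ≤ k) :
    ∃ (τ : Type) (_ : Fintype τ) (N : DFA (Fin 1) τ),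
      N.accepts = L ^ k ∧ Fintype.card τ ≤ k * n - k + 1 := by
  subst hL hn
  obtain ⟨t, p, hp, htp, hper⟩ := M.exists_periodicFrom_lengths_accepts
  obtain ⟨j, rfl⟩ : ∃ j, k = j + 1 := ⟨k - 1, by omega⟩
  have hpow : (M.accepts ^ (j + 1)).lengths.PeriodicFrom ((j + 1) * t + j * (p - 1)) p := by
    rw [Language.lengths_pow]
    exact hper.nsmul j
  refine ⟨_, inferInstance, DFA.lasso ((j + 1) * t + j * (p - 1)) p hp
    (M.accepts ^ (j + 1)).lengths, ?_, ?_⟩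
  · rw [DFA.lasso_accepts hp hpow]
    ext w
    exact Language.mem_iff_length_mem_lengths.symm
  · obtain ⟨q, rfl⟩ : ∃ q, p = q + 1 := ⟨p - 1, by omega⟩
    calc Fintype.card (Fin ((j + 1) * t + j * (q + 1 - 1) + (q + 1)))
        = (j + 1) * (t + q) + 1 := by rw [Fintype.card_fin, Nat.add_sub_cancel]; ring
      _ ≤ (j + 1) * (Fintype.card σ - 1) + 1 := by gcongr; omega
      _ = (j + 1) * Fintype.card σ - (j + 1) + 1 := by rw [Nat.mul_sub_one]
end

section
/- For all integers n ≥ 2 and k ≥ 2, there exists a DFA M with exactly n states over a one-letter (unary) alphabet such that every DFA accepting the language L(M)^k has at least k·n − k + 1 states. -/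
/-!
Let `M` be the `n`-state cycle over one letter `a` whose only accepting state is the last one, so
that `L(M) = {aʲ | j ≡ n - 1 mod n}`. Every word of `L(M)` has length at least `n - 1`, hence
`L(M)^k` contains `a^(k(n-1))` and no shorter word. For `i < j ≤ k(n-1)` the suffix `a^(k(n-1)-j)`
then separates `aⁱ` from `aʲ`, so these `k(n-1) + 1` words have pairwise distinct left quotients
and a DFA for `L(M)^k` must reach them in pairwise distinct states.
-/

open Function List

namespace Language

variable {α : Type*} {L : Language α}

theorem le_length_of_mem_pow {m : ℕ} (hL : ∀ w ∈ L, m ≤ w.length) :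
    ∀ k : ℕ, ∀ w ∈ L ^ k, k * m ≤ w.length
  | 0, _, _ => by simp
  | k + 1, _, hw => by
    obtain ⟨u, hu, v, hv, rfl⟩ := mem_mul.1 (pow_succ L k ▸ hw)
    have := le_length_of_mem_pow hL k u hu
    have := hL v hv
    rw [length_append, Nat.succ_mul]
    omega

theorem replicate_mul_mem_pow {a : α} {m : ℕ} (h : replicate m a ∈ L) :
    ∀ k : ℕ, replicate (k * m) a ∈ L ^ k
  | 0 => by simp
  | k + 1 => by
    rw [pow_succ, Nat.succ_mul, replicate_add]
    exact append_mem_mul (replicate_mul_mem_pow h k) h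

theorem leftQuotient_replicate_ne {a : α} {t i j : ℕ} (hmem : replicate t a ∈ L)
    (hlen : ∀ w ∈ L, t ≤ w.length) (hij : i < j) (hjt : j ≤ t) :
    L.leftQuotient (replicate i a) ≠ L.leftQuotient (replicate j a) := by
  intro h
  have hj : replicate (t - j) a ∈ L.leftQuotient (replicate j a) := by
    rwa [mem_leftQuotient, ← replicate_add, Nat.add_sub_cancel' hjt]
  rw [← h, mem_leftQuotient, ← replicate_add] at hj
  have := hlen _ hj
  simp only [length_replicate] at this
  omega

theorem injective_leftQuotient_replicate {a : α} {t : ℕ} (hmem : replicate t a ∈ L)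
    (hlen : ∀ w ∈ L, t ≤ w.length) :
    Injective fun i : Fin (t + 1) => L.leftQuotient (replicate i a) :=
  Injective.of_lt_imp_ne fun _ j hij =>
    leftQuotient_replicate_ne hmem hlen hij (Nat.le_of_lt_succ j.isLt)

end Language

namespace DFA

variable {α σ : Type*}

theorem card_le_of_injective_leftQuotient [Fintype σ] {ι : Type*} [Fintype ι] (M : DFA α σ)
    {w : ι → List α} (hw : Injective (M.accepts.leftQuotient ∘ w)) :
    Fintype.card ι ≤ Fintype.card σ := by
  rw [Language.leftQuotient_accepts] at hw
  exact Fintype.card_le_of_injective _ (hw.of_comp (f := M.acceptsFrom))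

@[simps]
def cyclic (α : Type*) (m : ℕ) : DFA α (Fin (m + 1)) where
  step q _ := q + 1
  start := 0
  accept := {Fin.last m}

theorem val_cyclic_evalFrom (m : ℕ) (q : Fin (m + 1)) (w : List α) :
    ((cyclic α m).evalFrom q w).val = (q.val + w.length) % (m + 1) := by
  induction w generalizing q with
  | nil => simp [evalFrom_nil, Nat.mod_eq_of_lt q.isLt]
  | cons _ w ih =>
    rw [evalFrom_cons, ih]
    simp only [cyclic_step, Fin.val_add, Fin.val_one', length_cons, Nat.add_mod_mod,
      Nat.mod_add_mod]
    ring_nf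

theorem mem_cyclic_accepts {m : ℕ} {w : List α} :
    w ∈ (cyclic α m).accepts ↔ w.length % (m + 1) = m := by
  rw [mem_accepts, eval, cyclic_accept, Set.mem_singleton_iff, Fin.ext_iff, val_cyclic_evalFrom]
  simp

theorem le_length_of_mem_cyclic_accepts {m : ℕ} {w : List α} (hw : w ∈ (cyclic α m).accepts) :
    m ≤ w.length :=
  mem_cyclic_accepts.1 hw ▸ Nat.mod_le _ _

theorem replicate_mem_cyclic_accepts (m : ℕ) (a : α) : replicate m a ∈ (cyclic α m).accepts :=
  mem_cyclic_accepts.2 <| by simp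

end DFA

theorem unary_power_lower_bound_general (n k : ℕ) (hn : 2 ≤ n) :
    ∃ (σ : Type) (_ : Fintype σ) (M : DFA (Fin 1) σ),
      Fintype.card σ = n ∧
      ∀ (τ : Type) [Fintype τ] (N : DFA (Fin 1) τ),
        N.accepts = M.accepts ^ k →
        k * n - k + 1 ≤ Fintype.card τ := by
  obtain ⟨m, rfl⟩ : ∃ m, n = m + 1 := ⟨n - 1, by omega⟩
  refine ⟨Fin (m + 1), inferInstance, DFA.cyclic (Fin 1) m, Fintype.card_fin _, ?_⟩
  intro τ _ N hN
  have hmem : replicate (k * m) 0 ∈ (DFA.cyclic (Fin 1) m).accepts ^ k :=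
    Language.replicate_mul_mem_pow (DFA.replicate_mem_cyclic_accepts m 0) k
  have hlen : ∀ w ∈ (DFA.cyclic (Fin 1) m).accepts ^ k, k * m ≤ w.length :=
    Language.le_length_of_mem_pow (fun _ => DFA.le_length_of_mem_cyclic_accepts) k
  have hcard := N.card_le_of_injective_leftQuotient
    (hN ▸ Language.injective_leftQuotient_replicate hmem hlen)
  rw [Fintype.card_fin] at hcard
  rw [Nat.mul_succ, Nat.add_sub_cancel]
  exact hcard

/-- For all `n ≥ 2` and `k ≥ 2`, there exists a DFA `M` with exactly `n` states over a
one-letter alphabet (here `Fin 1`) such that every DFA accepting `L(M)^k` has at least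
`k*n - k + 1` states. -/
theorem unary_power_lower_bound (n k : ℕ) (hn : 2 ≤ n) (hk : 2 ≤ k) :
    ∃ (σ : Type) (_ : Fintype σ) (M : DFA (Fin 1) σ),
      Fintype.card σ = n ∧
      ∀ (τ : Type) [Fintype τ] (N : DFA (Fin 1) τ),
        N.accepts = M.accepts ^ k →
        k * n - k + 1 ≤ Fintype.card τ :=
  unary_power_lower_bound_general n k hn
end

section
/- Fix integers n ≥ 2 and k ≥ 2 and let a be the unique letter of a one-letter alphabet. Every DFA accepting the unary language {a^(k(n−1)+mn) : m ≥ 0} (i.e., 0^(k(n−1))(0^n)*) has at least k·n − k + 1 states. -/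
/-!
The shortest word accepted by the DFA is `a^(k(n-1))`. If the DFA had at most `k(n-1)` states,
the pumping lemma would let us delete a nonempty factor of this word and still be accepted,
producing a shorter accepted word.
-/

namespace DFA

variable {α σ : Type*} {M : DFA α σ}

theorem length_lt_card_of_forall_length_le [Fintype σ] {x : List α} (hx : x ∈ M.accepts)
    (hmin : ∀ y ∈ M.accepts, x.length ≤ y.length) : x.length < Fintype.card σ := by
  by_contra! hcard
  obtain ⟨a, b, c, rfl, -, hb, hpump⟩ := M.pumping_lemma hx hcard
  have hac : a ++ c ∈ M.accepts :=
    hpump (Language.mem_mul.2 ⟨a, Language.mem_mul.2 ⟨a, rfl, [], Language.nil_mem_kstar _,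
      List.append_nil a⟩, c, rfl, rfl⟩)
  have hb_pos : 0 < b.length := List.length_pos_iff.2 hb
  have hlen := hmin _ hac
  simp only [List.length_append] at hlen
  omega

end DFA

theorem unary_cycle_power_lower_bound_general (n k : ℕ) :
    ∀ (τ : Type) [Fintype τ] (N : DFA (Fin 1) τ),
      N.accepts = {w : List (Fin 1) | ∃ m : ℕ, w = List.replicate (k * (n - 1) + m * n) (0 : Fin 1)} →
      k * n - k + 1 ≤ Fintype.card τ := by
  intro τ _ N hacc
  have hshortest : List.replicate (k * (n - 1)) (0 : Fin 1) ∈ N.accepts := by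
    rw [hacc]
    exact ⟨0, by simp⟩
  have hmin : ∀ y ∈ N.accepts, (List.replicate (k * (n - 1)) (0 : Fin 1)).length ≤ y.length := by
    rw [hacc]
    rintro _ ⟨m, rfl⟩
    simp
  have hcard := N.length_lt_card_of_forall_length_le hshortest hmin
  rw [List.length_replicate, Nat.mul_sub_one] at hcard
  omega

/-- Fix `n ≥ 2` and `k ≥ 2`, and let `a` be the unique letter of a one-letter alphabet
(here `a = 0 : Fin 1`). Every DFA accepting the unary language
`{a^(k*(n-1)+m*n) : m ≥ 0}` (i.e. `0^(k(n-1))(0^n)*`) has at least `k*n - k + 1` states. -/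
theorem unary_cycle_power_lower_bound (n k : ℕ) (hn : 2 ≤ n) (hk : 2 ≤ k) :
    ∀ (τ : Type) [Fintype τ] (N : DFA (Fin 1) τ),
      N.accepts = {w : List (Fin 1) | ∃ m : ℕ, w = List.replicate (k * (n - 1) + m * n) (0 : Fin 1)} →
      k * n - k + 1 ≤ Fintype.card τ :=
  unary_cycle_power_lower_bound_general n k
end

section
/- Let L₁ and L₂ be languages over a one-letter alphabet {a}. Suppose L₁ is eventually periodic with threshold μ₁ and period λ₁ ≥ 1 (i.e., for all m ≥ μ₁, a^m ∈ L₁ if and only if a^(m+λ₁) ∈ L₁), and L₂ is eventually periodic with threshold μ₂ and period λ₂ ≥ 1. Then the concatenation L₁·L₂ is eventually periodic with period lcm(λ₁,λ₂) and threshold μ₁ + μ₂ + lcm(λ₁,λ₂) − 1; that is, for all m ≥ μ₁ + μ₂ + lcm(λ₁,λ₂) − 1, a^m ∈ L₁L₂ if and only if a^(m+lcm(λ₁,λ₂)) ∈ L₁L₂. -/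
/-!
Identify a unary language with its set of exponents `{n | aⁿ ∈ L}`; concatenation becomes the
sumset. Both factors are eventually periodic with the common period `p = lcm(λ₁, λ₂)`. If
`x + y = m ≥ μ₁ + μ₂ + p - 1`, then `x ≥ μ₁` or `y ≥ μ₂`, so one summand can be shifted by `p`
inside its set; conversely, if `x + y = m + p`, then `x ≥ μ₁ + p` or `y ≥ μ₂ + p`, so one
summand can be shifted back by `p`.
-/

open Pointwise

def IsEventuallyPeriodic (S : Set ℕ) (μ p : ℕ) : Prop :=
  ∀ m, μ ≤ m → (m ∈ S ↔ m + p ∈ S)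

namespace IsEventuallyPeriodic

variable {S T : Set ℕ} {μ ν p : ℕ}

theorem mul_period (hS : IsEventuallyPeriodic S μ p) (k : ℕ) :
    IsEventuallyPeriodic S μ (p * k) := by
  induction k with
  | zero => simp [IsEventuallyPeriodic]
  | succ k ih =>
    intro m hm
    rw [ih m hm, hS (m + p * k) (by omega), Nat.mul_succ, Nat.add_assoc]

theorem of_dvd {q : ℕ} (hS : IsEventuallyPeriodic S μ p) (hpq : p ∣ q) :
    IsEventuallyPeriodic S μ q := by
  obtain ⟨k, rfl⟩ := hpq
  exact hS.mul_period k

theorem add (hS : IsEventuallyPeriodic S μ p) (hT : IsEventuallyPeriodic T ν p) :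
    IsEventuallyPeriodic (S + T) (μ + ν + p - 1) p := by
  intro m hm
  simp only [Set.mem_add]
  constructor
  · rintro ⟨x, hx, y, hy, rfl⟩
    by_cases hxμ : μ ≤ x
    · exact ⟨x + p, (hS x hxμ).mp hx, y, hy, by omega⟩
    · exact ⟨x, hx, y + p, (hT y (by omega)).mp hy, by omega⟩
  · rintro ⟨x, hx, y, hy, hxy⟩
    by_cases hxμ : μ + p ≤ x
    · obtain ⟨x', rfl⟩ : ∃ x', x = x' + p := ⟨x - p, by omega⟩
      exact ⟨x', (hS x' (by omega)).mpr hx, y, hy, by omega⟩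
    · obtain ⟨y', rfl⟩ : ∃ y', y = y' + p := ⟨y - p, by omega⟩
      exact ⟨x, hx, y', (hT y' (by omega)).mpr hy, by omega⟩

end IsEventuallyPeriodic

namespace Language

variable {α : Type*}

def exponents (L : Language α) (a : α) : Set ℕ :=
  {n | List.replicate n a ∈ L}

theorem exponents_mul (L₁ L₂ : Language α) (a : α) :
    (L₁ * L₂).exponents a = L₁.exponents a + L₂.exponents a := by
  ext n
  simp only [exponents, Set.mem_ofPred_eq, Set.mem_add, mem_mul, List.append_eq_replicate_iff]
  constructor
  · rintro ⟨u, hu, v, hv, rfl, hu_rep, hv_rep⟩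
    exact ⟨u.length, hu_rep ▸ hu, v.length, hv_rep ▸ hv, rfl⟩
  · rintro ⟨i, hi, j, hj, rfl⟩
    exact ⟨_, hi, _, hj, by simp⟩

end Language

theorem unary_concat_eventually_periodic_general (L₁ L₂ : Language (Fin 1))
    (μ₁ μ₂ lam₁ lam₂ : ℕ)
    (h₁ : ∀ m : ℕ, μ₁ ≤ m →
      (List.replicate m (0 : Fin 1) ∈ L₁ ↔ List.replicate (m + lam₁) (0 : Fin 1) ∈ L₁))
    (h₂ : ∀ m : ℕ, μ₂ ≤ m →
      (List.replicate m (0 : Fin 1) ∈ L₂ ↔ List.replicate (m + lam₂) (0 : Fin 1) ∈ L₂)) :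
    ∀ m : ℕ, μ₁ + μ₂ + Nat.lcm lam₁ lam₂ - 1 ≤ m →
      (List.replicate m (0 : Fin 1) ∈ L₁ * L₂ ↔
        List.replicate (m + Nat.lcm lam₁ lam₂) (0 : Fin 1) ∈ L₁ * L₂) := by
  have H₁ : IsEventuallyPeriodic (L₁.exponents 0) μ₁ (Nat.lcm lam₁ lam₂) :=
    IsEventuallyPeriodic.of_dvd h₁ (Nat.dvd_lcm_left lam₁ lam₂)
  have H₂ : IsEventuallyPeriodic (L₂.exponents 0) μ₂ (Nat.lcm lam₁ lam₂) :=
    IsEventuallyPeriodic.of_dvd h₂ (Nat.dvd_lcm_right lam₁ lam₂)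
  have H := H₁.add H₂
  rwa [← Language.exponents_mul] at H

/-- Let `L₁`, `L₂` be languages over a one-letter alphabet (here `{a}` with
`a = 0 : Fin 1`). If `L₁` is eventually periodic with threshold `μ₁` and period
`λ₁ ≥ 1`, and `L₂` is eventually periodic with threshold `μ₂` and period `λ₂ ≥ 1`,
then `L₁ * L₂` is eventually periodic with period `lcm(λ₁,λ₂)` and threshold
`μ₁ + μ₂ + lcm(λ₁,λ₂) - 1`. -/
theorem unary_concat_eventually_periodic (L₁ L₂ : Language (Fin 1))
    (μ₁ μ₂ lam₁ lam₂ : ℕ) (hlam₁ : 1 ≤ lam₁) (hlam₂ : 1 ≤ lam₂)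
    (h₁ : ∀ m : ℕ, μ₁ ≤ m →
      (List.replicate m (0 : Fin 1) ∈ L₁ ↔ List.replicate (m + lam₁) (0 : Fin 1) ∈ L₁))
    (h₂ : ∀ m : ℕ, μ₂ ≤ m →
      (List.replicate m (0 : Fin 1) ∈ L₂ ↔ List.replicate (m + lam₂) (0 : Fin 1) ∈ L₂)) :
    ∀ m : ℕ, μ₁ + μ₂ + Nat.lcm lam₁ lam₂ - 1 ≤ m →
      (List.replicate m (0 : Fin 1) ∈ L₁ * L₂ ↔
        List.replicate (m + Nat.lcm lam₁ lam₂) (0 : Fin 1) ∈ L₁ * L₂) :=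
  unary_concat_eventually_periodic_general L₁ L₂ μ₁ μ₂ lam₁ lam₂ h₁ h₂
end

section
/- Let L be a language over a one-letter alphabet {a} that is eventually periodic with threshold μ ≥ 0 and period λ ≥ 1 (i.e., for all m ≥ μ, a^m ∈ L if and only if a^(m+λ) ∈ L). Then for every integer k ≥ 2, the k-fold concatenation L^k is eventually periodic with period λ and threshold k·μ + (k−1)·λ − k + 1; that is, for all m ≥ k·μ + (k−1)·λ − k + 1, a^m ∈ L^k if and only if a^(m+λ) ∈ L^k. -/
/-!
Reading a unary word by its length, `a^M ∈ A * B` means `M = i + j` with `a^i ∈ A` and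
`a^j ∈ B`. If `M` is large, one of the two summands is beyond its threshold, so the period
can be added to (or, going back, removed from) that summand alone; this gives the product of
two eventually periodic unary languages the threshold `μ + ν + λ - 1`, and iterating it gives
the threshold of `L^k`.
-/

open List

namespace Language

variable {α : Type*}

def ReplicatePeriodic (L : Language α) (a : α) (μ p : ℕ) : Prop :=
  ∀ m, μ ≤ m → (replicate m a ∈ L ↔ replicate (m + p) a ∈ L)

theorem replicate_mem_mul_iff {A B : Language α} {a : α} {n : ℕ} :
    replicate n a ∈ A * B ↔ ∃ i j, i + j = n ∧ replicate i a ∈ A ∧ replicate j a ∈ B := by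
  rw [mem_mul]
  constructor
  · rintro ⟨u, hu, v, hv, huv⟩
    obtain ⟨hlen, hu_eq, hv_eq⟩ := append_eq_replicate_iff.mp huv
    exact ⟨_, _, hlen, hu_eq ▸ hu, hv_eq ▸ hv⟩
  · rintro ⟨i, j, rfl, hi, hj⟩
    exact ⟨_, hi, _, hj, (replicate_add i j a).symm⟩

namespace ReplicatePeriodic

variable {A B L : Language α} {a : α} {μ ν p : ℕ}

theorem mono (h : L.ReplicatePeriodic a μ p) (hμν : μ ≤ ν) : L.ReplicatePeriodic a ν p :=
  fun m hm => h m (hμν.trans hm)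

theorem one : (1 : Language α).ReplicatePeriodic a 1 p := by
  intro m hm
  simp only [mem_one, replicate_eq_nil_iff]
  omega

theorem mul (hA : A.ReplicatePeriodic a μ p) (hB : B.ReplicatePeriodic a ν p) :
    (A * B).ReplicatePeriodic a (μ + ν + p - 1) p := by
  intro m hm
  rw [replicate_mem_mul_iff, replicate_mem_mul_iff]
  constructor
  · rintro ⟨i, j, rfl, hi, hj⟩
    by_cases hμi : μ ≤ i
    · exact ⟨i + p, j, by omega, (hA i hμi).mp hi, hj⟩
    · exact ⟨i, j + p, by omega, hi, (hB j (by omega)).mp hj⟩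
  · rintro ⟨i, j, hij, hi, hj⟩
    by_cases hμi : μ + p ≤ i
    · refine ⟨i - p, j, by omega, (hA (i - p) (by omega)).mpr ?_, hj⟩
      rwa [Nat.sub_add_cancel (by omega)]
    · refine ⟨i, j - p, by omega, hi, (hB (j - p) (by omega)).mpr ?_⟩
      rwa [Nat.sub_add_cancel (by omega)]

theorem pow_succ (h : L.ReplicatePeriodic a μ p) :
    ∀ k : ℕ, (L ^ (k + 1)).ReplicatePeriodic a ((k + 1) * μ + k * (p - 1)) p
  | 0 => by simpa using h
  | k + 1 => by
    rw [_root_.pow_succ]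
    refine ((pow_succ h k).mul h).mono ?_
    simp only [add_mul, one_mul]
    omega

end ReplicatePeriodic

end Language

theorem unary_power_eventually_periodic_general (L : Language (Fin 1)) (μ lam : ℕ)
    (hlam : 1 ≤ lam)
    (h : ∀ m : ℕ, μ ≤ m →
      (List.replicate m (0 : Fin 1) ∈ L ↔ List.replicate (m + lam) (0 : Fin 1) ∈ L))
    (k : ℕ) :
    ∀ m : ℕ, k * μ + (k - 1) * lam - k + 1 ≤ m →
      (List.replicate m (0 : Fin 1) ∈ L ^ k ↔
        List.replicate (m + lam) (0 : Fin 1) ∈ L ^ k) := by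
  cases k with
  | zero => exact Language.ReplicatePeriodic.one.mono (by simp)
  | succ k =>
    refine (Language.ReplicatePeriodic.pow_succ h k).mono ?_
    have hk : k ≤ k * lam := Nat.le_mul_of_pos_right k hlam
    rw [Nat.add_sub_cancel, Nat.mul_sub_one]
    omega

/-- Let `L` be a language over a one-letter alphabet (here `{a}` with `a = 0 : Fin 1`)
that is eventually periodic with threshold `μ ≥ 0` and period `λ ≥ 1`. Then for every
`k ≥ 2`, the `k`-fold concatenation `L^k` is eventually periodic with period `λ` and
threshold `k*μ + (k-1)*λ - k + 1`. -/
theorem unary_power_eventually_periodic (L : Language (Fin 1)) (μ lam : ℕ)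
    (hlam : 1 ≤ lam)
    (h : ∀ m : ℕ, μ ≤ m →
      (List.replicate m (0 : Fin 1) ∈ L ↔ List.replicate (m + lam) (0 : Fin 1) ∈ L))
    (k : ℕ) (hk : 2 ≤ k) :
    ∀ m : ℕ, k * μ + (k - 1) * lam - k + 1 ≤ m →
      (List.replicate m (0 : Fin 1) ∈ L ^ k ↔
        List.replicate (m + lam) (0 : Fin 1) ∈ L ^ k) :=
  unary_power_eventually_periodic_general L μ lam hlam h k
end
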